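/- For n > 1, the number of monogenic submonoids of T_n up to isomorphism equals ∑_{k=1}^{n} s(k), where s(k) denotes the number of non-isomorphic cyclic subgroups of S_k (equivalently, the number of distinct orders of elements of S_k). -/

import Mathlib

/-- The number of distinct orders of elements of the symmetric group on k points. -/
noncomputable def numOrders (k : ℕ) : ℕ :=
  (Finset.univ.image fun g : Equiv.Perm (Fin k) => orderOf g).card

/-- Monogenic submonoids of `T_n`, up to monoid isomorphism. -/
def monogenicSetoid (n : ℕ) :
    Setoid {N : Submonoid (Function.End (Fin n)) // ∃ a, N = Submonoid.closure {a}} where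
  r M N := Nonempty (↥M.1 ≃* ↥N.1)
  iseqv := ⟨fun _ => ⟨MulEquiv.refl _⟩, fun ⟨e⟩ => ⟨e.symm⟩, fun ⟨e⟩ ⟨e'⟩ => ⟨e.trans e'⟩⟩

/-!
The powers of an element `a` of a finite monoid form a "rho": they are pairwise distinct up to
an index `m`, and then cycle with period `r`, i.e. `a ^ (m + r) = a ^ m`. The pair `(m, r)`
determines the monoid generated by `a` up to isomorphism, and conversely it does not depend on
the chosen generator: two generators of the same monoid give monoids of the same size `m + r`,
and unless they coincide both have index at most `1`, with index `0` exactly when the monoid is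
a group.

For `a ∈ T_n` the images of `a ^ k` shrink strictly until `k = m`, so `m < n`, and `a` permutes the
image of `a ^ m`, a set of at most `n - m` points, as a permutation of order `r`. Conversely a
permutation `σ ∈ S_k` with a tail of length `n - k` attached realises `(n - k, ord σ)`. Hence the
isomorphism classes correspond to the pairs `(k, r)` with `1 ≤ k ≤ n` and `r` the order of an
element of `S_k`.
-/

open Function Submonoid Set

section IndexPeriod

variable {M N : Type*} [Monoid M] [Monoid N]

theorem isPeriodicPt_mul_left_pow_iff (a : M) {d i : ℕ} :
    IsPeriodicPt (a * ·) d (a ^ i) ↔ a ^ (i + d) = a ^ i := by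
  rw [IsPeriodicPt, IsFixedPt, mul_left_iterate_apply, ← pow_add, add_comm]

noncomputable def closureMulEquivOfPowEqPowIff {a : M} {b : N}
    (h : ∀ i j : ℕ, a ^ i = a ^ j ↔ b ^ i = b ^ j) : closure {a} ≃* closure {b} :=
  (MulEquiv.submonoidCongr (closure_singleton_eq a)).trans <|
    (Con.quotientKerEquivRange (powersHom M a)).symm.trans <|
    (Con.congr (MulEquiv.refl _) (by ext i j; simp [Con.ker_rel, h])).trans <|
    (Con.quotientKerEquivRange (powersHom N b)).trans
      (MulEquiv.submonoidCongr (closure_singleton_eq b)).symm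

theorem closure_singleton_mk_self_eq_top (a : M) :
    closure {(⟨a, subset_closure rfl⟩ : closure {a})} = ⊤ := by
  rw [← closure_closure_coe_preimage (s := {a})]
  congr 1
  ext x
  simp [Subtype.ext_iff]

theorem closure_singleton_mulEquiv_apply_eq_top {a : M} {b : N} (e : closure {a} ≃* closure {b}) :
    closure {e ⟨a, subset_closure rfl⟩} = ⊤ := by
  rw [← Set.image_singleton, ← MonoidHom.map_mclosure, closure_singleton_mk_self_eq_top,
    ← MonoidHom.mrange_eq_map, MonoidHom.mrange_eq_top_of_surjective _ e.surjective]

variable [Finite M] [Finite N]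

theorem exists_pow_mem_periodicPts_mul_left (a : M) : ∃ m, a ^ m ∈ periodicPts (a * ·) := by
  obtain ⟨i, j, hne, hij⟩ := Finite.exists_ne_map_eq_of_infinite (a ^ · : ℕ → M)
  wlog hlt : i < j generalizing i j
  · exact this j i hne.symm hij.symm (hne.lt_or_gt.resolve_left hlt)
  refine ⟨i, mk_mem_periodicPts (Nat.sub_pos_of_lt hlt) ?_⟩
  rw [isPeriodicPt_mul_left_pow_iff, Nat.add_sub_cancel' hlt.le]
  exact hij.symm

-- `a ^ k` is the orbit of `1` under `(a * ·)`: the index is the time it takes to reach the cycle,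
-- the period is the length of the cycle.
open Classical in
noncomputable def powIndex (a : M) : ℕ := Nat.find (exists_pow_mem_periodicPts_mul_left a)

noncomputable def powPeriod (a : M) : ℕ := minimalPeriod (a * ·) (a ^ powIndex a)

theorem pow_mem_periodicPts_mul_left_iff {a : M} {k : ℕ} :
    a ^ k ∈ periodicPts (a * ·) ↔ powIndex a ≤ k := by
  classical
  refine ⟨fun h => Nat.find_min' _ h, fun h => ?_⟩
  obtain ⟨d, rfl⟩ := Nat.exists_eq_add_of_le' h
  obtain ⟨p, hp, hper⟩ :=
    mem_periodicPts.1 (Nat.find_spec (exists_pow_mem_periodicPts_mul_left a))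
  rw [pow_add, ← mul_left_iterate_apply]
  exact mk_mem_periodicPts hp (hper.apply_iterate d)

theorem minimalPeriod_mul_left_pow {a : M} {k : ℕ} (hk : powIndex a ≤ k) :
    minimalPeriod (a * ·) (a ^ k) = powPeriod a := by
  obtain ⟨d, rfl⟩ := Nat.exists_eq_add_of_le' hk
  rw [pow_add, ← mul_left_iterate_apply,
    minimalPeriod_apply_iterate (pow_mem_periodicPts_mul_left_iff.2 le_rfl), powPeriod]

theorem powPeriod_pos (a : M) : 0 < powPeriod a :=
  minimalPeriod_pos_of_mem_periodicPts (pow_mem_periodicPts_mul_left_iff.2 le_rfl)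

theorem pow_add_eq_pow_iff {a : M} {i d : ℕ} :
    a ^ (i + d) = a ^ i ↔ d = 0 ∨ powIndex a ≤ i ∧ powPeriod a ∣ d := by
  rw [← isPeriodicPt_mul_left_pow_iff]
  rcases Nat.eq_zero_or_pos d with rfl | hd
  · simp [isPeriodicPt_zero]
  refine ⟨fun h => ?_, ?_⟩
  · have hi := pow_mem_periodicPts_mul_left_iff.1 (mk_mem_periodicPts hd h)
    exact Or.inr ⟨hi, minimalPeriod_mul_left_pow hi ▸ h.minimalPeriod_dvd⟩
  · rintro (rfl | ⟨hi, hdvd⟩)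
    · exact (lt_irrefl 0 hd).elim
    · exact isPeriodicPt_iff_minimalPeriod_dvd.2 (minimalPeriod_mul_left_pow hi ▸ hdvd)

theorem powIndex_le_of_pow_eq_pow {a : M} {i j : ℕ} (hij : i < j) (h : a ^ i = a ^ j) :
    powIndex a ≤ i := by
  obtain ⟨d, rfl⟩ := Nat.exists_eq_add_of_le hij.le
  rcases pow_add_eq_pow_iff.1 h.symm with hd | ⟨hi, -⟩
  · omega
  · exact hi

theorem powIndex_le_one_of_pow_eq_self {a : M} {k : ℕ} (hk : k ≠ 1) (h : a ^ k = a) :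
    powIndex a ≤ 1 := by
  replace h : a ^ 1 = a ^ k := by rw [pow_one, h]
  rcases Nat.lt_or_gt_of_ne hk with hk | hk
  · exact (powIndex_le_of_pow_eq_pow hk h.symm).trans (by omega)
  · exact powIndex_le_of_pow_eq_pow hk h

theorem powIndex_eq_zero_iff {a : M} : powIndex a = 0 ↔ IsOfFinOrder a := by
  rw [isOfFinOrder_iff_pow_eq_one]
  refine ⟨fun h => ⟨powPeriod a, powPeriod_pos a, ?_⟩, fun ⟨n, hn, h⟩ => ?_⟩
  · rw [← pow_zero a, ← zero_add (powPeriod a), pow_add_eq_pow_iff, h]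
    exact Or.inr ⟨le_rfl, dvd_rfl⟩
  · rw [← pow_zero a, ← zero_add n, pow_add_eq_pow_iff] at h
    omega

theorem exists_lt_powIndex_add_powPeriod_pow_eq (a : M) (k : ℕ) :
    ∃ i < powIndex a + powPeriod a, a ^ i = a ^ k := by
  rcases lt_or_ge k (powIndex a + powPeriod a) with hk | hk
  · exact ⟨k, hk, rfl⟩
  refine ⟨powIndex a + (k - powIndex a) % powPeriod a,
    by have := Nat.mod_lt (k - powIndex a) (powPeriod_pos a); omega, ?_⟩
  have hk : k = powIndex a + (k - powIndex a) % powPeriod a +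
      powPeriod a * ((k - powIndex a) / powPeriod a) := by
    have := Nat.mod_add_div (k - powIndex a) (powPeriod a); omega
  conv_rhs => rw [hk]
  exact (pow_add_eq_pow_iff.2 (Or.inr ⟨by omega, dvd_mul_right _ _⟩)).symm

theorem pow_injOn_Iio (a : M) : Set.InjOn (a ^ ·) (Set.Iio (powIndex a + powPeriod a)) := by
  suffices ∀ i j, i ≤ j → j < powIndex a + powPeriod a → a ^ j = a ^ i → i = j by
    intro i hi j hj hij
    rcases le_total i j with h | h
    · exact this i j h hj hij.symm
    · exact (this j i h hi hij).symm
  intro i j hij hj h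
  obtain ⟨d, rfl⟩ := Nat.exists_eq_add_of_le hij
  rcases pow_add_eq_pow_iff.1 h with hd | ⟨hi, hdvd⟩
  · omega
  · have := Nat.eq_zero_of_dvd_of_lt hdvd (by omega)
    omega

theorem card_closure_singleton (a : M) :
    Nat.card (closure {a}) = powIndex a + powPeriod a := by
  classical
  have hmem (x : M) :
      x ∈ closure {a} ↔ x ∈ (Finset.range (powIndex a + powPeriod a)).image (a ^ ·) := by
    simp only [mem_closure_singleton, Finset.mem_image, Finset.mem_range]
    refine ⟨fun ⟨k, hk⟩ => ?_, fun ⟨i, _, hi⟩ => ⟨i, hi⟩⟩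
    obtain ⟨i, hi, hik⟩ := exists_lt_powIndex_add_powPeriod_pow_eq a k
    exact ⟨i, hi, hik.trans hk⟩
  rw [Nat.card_congr (Equiv.subtypeEquivRight hmem), Nat.card_eq_finsetCard,
    Finset.card_image_of_injOn, Finset.card_range]
  rw [Finset.coe_range]
  exact pow_injOn_Iio a

theorem powIndex_eq_and_powPeriod_eq_of_pow_add_eq_pow_iff {a : M} {m r : ℕ}
    (h : ∀ i d, a ^ (i + d) = a ^ i ↔ d = 0 ∨ m ≤ i ∧ r ∣ d) :
    powIndex a = m ∧ powPeriod a = r := by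
  have key i d := pow_add_eq_pow_iff.symm.trans (h i d)
  have hper := powPeriod_pos a
  obtain ⟨hm, hr⟩ : m ≤ powIndex a ∧ r ∣ powPeriod a :=
    ((key _ _).1 (Or.inr ⟨le_rfl, dvd_rfl⟩)).resolve_left hper.ne'
  have hr0 : r ≠ 0 := by rintro rfl; exact hper.ne' (zero_dvd_iff.1 hr)
  obtain ⟨hm', hr'⟩ := ((key _ _).2 (Or.inr ⟨le_rfl, dvd_rfl⟩)).resolve_left hr0
  exact ⟨le_antisymm hm' hm, Nat.dvd_antisymm hr' hr⟩

theorem powIndex_eq_and_powPeriod_eq_of_injective {f : M →* N} (hf : Injective f) (a : M) :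
    powIndex (f a) = powIndex a ∧ powPeriod (f a) = powPeriod a :=
  powIndex_eq_and_powPeriod_eq_of_pow_add_eq_pow_iff fun i d => by
    rw [← map_pow, ← map_pow, hf.eq_iff, pow_add_eq_pow_iff]

theorem powIndex_eq_and_powPeriod_eq_of_closure_eq {a b : M} (h : closure {a} = closure {b}) :
    powIndex a = powIndex b ∧ powPeriod a = powPeriod b := by
  have hcard : powIndex a + powPeriod a = powIndex b + powPeriod b := by
    rw [← card_closure_singleton, ← card_closure_singleton, h]
  suffices powIndex a = powIndex b from ⟨this, by omega⟩
  obtain ⟨i, rfl⟩ := mem_closure_singleton.1 (h ▸ subset_closure rfl : b ∈ closure {a})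
  obtain ⟨j, hj⟩ := mem_closure_singleton.1 (h ▸ subset_closure rfl : a ∈ closure {a ^ i})
  rcases eq_or_ne (i * j) 1 with hij | hij
  · rw [(mul_eq_one.1 hij).1, pow_one]
  -- Now `a = a ^ (i * j)` with `i * j ≠ 1`, so both generators have index at most one.
  have ha : powIndex a ≤ 1 := powIndex_le_one_of_pow_eq_self hij (by rw [pow_mul, hj])
  have hb : powIndex (a ^ i) ≤ 1 :=
    powIndex_le_one_of_pow_eq_self (k := j * i) (by rwa [mul_comm]) (by rw [pow_mul, hj])
  have hfin : IsOfFinOrder a ↔ IsOfFinOrder (a ^ i) := ⟨fun h => h.pow, fun h => hj ▸ h.pow⟩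
  rw [← powIndex_eq_zero_iff, ← powIndex_eq_zero_iff] at hfin
  omega

theorem powIndex_eq_and_powPeriod_eq_of_mulEquiv {a : M} {b : N}
    (e : closure {a} ≃* closure {b}) : powIndex a = powIndex b ∧ powPeriod a = powPeriod b := by
  obtain ⟨ha1, ha2⟩ := powIndex_eq_and_powPeriod_eq_of_injective
    (f := (closure {a}).subtype) Subtype.val_injective ⟨a, subset_closure rfl⟩
  obtain ⟨hb1, hb2⟩ := powIndex_eq_and_powPeriod_eq_of_injective
    (f := (closure {b}).subtype) Subtype.val_injective ⟨b, subset_closure rfl⟩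
  obtain ⟨he1, he2⟩ := powIndex_eq_and_powPeriod_eq_of_injective
    (f := e.toMonoidHom) e.injective ⟨a, subset_closure rfl⟩
  obtain ⟨hc1, hc2⟩ := powIndex_eq_and_powPeriod_eq_of_closure_eq
    ((closure_singleton_mulEquiv_apply_eq_top e).trans (closure_singleton_mk_self_eq_top b).symm)
  simp only [coe_subtype, MulEquiv.coe_toMonoidHom] at *
  exact ⟨by rw [ha1, ← he1, hc1, ← hb1], by rw [ha2, ← he2, hc2, ← hb2]⟩

theorem pow_eq_pow_iff_of_powIndex_eq_of_powPeriod_eq {a : M} {b : N}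
    (h₁ : powIndex a = powIndex b) (h₂ : powPeriod a = powPeriod b) (i j : ℕ) :
    a ^ i = a ^ j ↔ b ^ i = b ^ j := by
  wlog hij : i ≤ j generalizing i j
  · simpa only [eq_comm] using this j i (le_of_not_ge hij)
  obtain ⟨d, rfl⟩ := Nat.exists_eq_add_of_le hij
  rw [eq_comm, pow_add_eq_pow_iff, eq_comm (a := b ^ i), pow_add_eq_pow_iff, h₁, h₂]

end IndexPeriod

namespace Function.End

variable {α : Type*}

instance [Finite α] : Finite (Function.End α) := inferInstanceAs (Finite (α → α))

theorem range_pow_subset_range_pow (a : Function.End α) {k l : ℕ} (hkl : k ≤ l) :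
    range (a ^ l) ⊆ range (a ^ k) := by
  obtain ⟨d, rfl⟩ := Nat.exists_eq_add_of_le hkl
  rw [pow_add]
  exact range_comp_subset_range (f := a ^ d) (g := a ^ k)

variable [Finite α] (a : Function.End α)

theorem bijOn_range_pow {k : ℕ} (h : range (a ^ (k + 1)) = range (a ^ k)) :
    BijOn a (range (a ^ k)) (range (a ^ k)) := by
  have hsucc (x : α) : (a ^ (k + 1)) x = a ((a ^ k) x) := by rw [pow_succ']; rfl
  have hmaps : MapsTo a (range (a ^ k)) (range (a ^ k)) := by
    rintro _ ⟨x, rfl⟩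
    exact h ▸ ⟨x, hsucc x⟩
  refine ((toFinite _).surjOn_iff_bijOn_of_mapsTo hmaps).1 ?_
  rintro _ ⟨x, rfl⟩
  obtain ⟨y, hy⟩ := h ▸ mem_range_self (f := a ^ k) x
  exact ⟨(a ^ k) y, mem_range_self y, (hsucc y).symm.trans hy⟩

noncomputable def rangePowPerm {k : ℕ} (h : range (a ^ (k + 1)) = range (a ^ k)) :
    Equiv.Perm (range (a ^ k)) :=
  (bijOn_range_pow a h).equiv a

theorem rangePowPerm_pow_eq_one_iff {k : ℕ} (h : range (a ^ (k + 1)) = range (a ^ k)) (t : ℕ) :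
    rangePowPerm a h ^ t = 1 ↔ a ^ (k + t) = a ^ k := by
  have hpow (y : range (a ^ k)) : ((rangePowPerm a h ^ t) y : α) = (a ^ t) y := by
    induction t with
    | zero => rfl
    | succ t ih => rw [pow_succ', Equiv.Perm.mul_apply, pow_succ']; exact congrArg a ih
  rw [add_comm, pow_add]
  change _ ↔ ((a ^ t : α → α) ∘ (a ^ k : α → α)) = (a ^ k : α → α)
  simp only [Equiv.ext_iff, Subtype.forall, Equiv.Perm.one_apply, Subtype.ext_iff, hpow]
  exact forall_mem_range.trans funext_iff.symm

theorem powIndex_le_of_range_pow_succ_eq {k : ℕ} (h : range (a ^ (k + 1)) = range (a ^ k)) :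
    powIndex a ≤ k :=
  powIndex_le_of_pow_eq_pow (lt_add_of_pos_right k (orderOf_pos _))
    ((rangePowPerm_pow_eq_one_iff a h _).1 (pow_orderOf_eq_one _)).symm

theorem range_pow_powIndex_succ : range (a ^ (powIndex a + 1)) = range (a ^ powIndex a) := by
  refine (range_pow_subset_range_pow a (Nat.le_succ _)).antisymm ?_
  have hper : a ^ (powIndex a + powPeriod a) = a ^ powIndex a :=
    pow_add_eq_pow_iff.2 (Or.inr ⟨le_rfl, dvd_rfl⟩)
  rw [← hper]
  exact range_pow_subset_range_pow a (by have := powPeriod_pos a; omega)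

theorem orderOf_rangePowPerm_powIndex :
    orderOf (rangePowPerm a (range_pow_powIndex_succ a)) = powPeriod a := by
  refine Nat.dvd_antisymm ?_ ?_
  · exact orderOf_dvd_of_pow_eq_one <| (rangePowPerm_pow_eq_one_iff a _ _).2 <|
      pow_add_eq_pow_iff.2 (Or.inr ⟨le_rfl, dvd_rfl⟩)
  · exact (pow_add_eq_pow_iff.1 <| (rangePowPerm_pow_eq_one_iff a _ _).1 <|
      pow_orderOf_eq_one _).resolve_left (orderOf_pos _).ne' |>.2

theorem ncard_range_pow_add_le {k : ℕ} (hk : k ≤ powIndex a) :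
    (range (a ^ k)).ncard + k ≤ Nat.card α := by
  induction k with
  | zero => rw [pow_zero, Function.End.one_def, range_id, ncard_univ]; rfl
  | succ k ih =>
    have hssub : range (a ^ (k + 1)) ⊂ range (a ^ k) :=
      (range_pow_subset_range_pow a k.le_succ).ssubset_of_ne fun h =>
        (powIndex_le_of_range_pow_succ_eq a h).not_gt hk
    have := ncard_lt_ncard hssub
    have := ih (by omega)
    omega

theorem powIndex_lt_card [Nonempty α] : powIndex a < Nat.card α := by
  have := ncard_range_pow_add_le a le_rfl
  have := (ncard_pos (toFinite _)).2 (range_nonempty (a ^ powIndex a))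
  omega

theorem exists_perm_orderOf_eq_powPeriod :
    ∃ σ : Equiv.Perm (Fin (Nat.card α - powIndex a)), orderOf σ = powPeriod a := by
  have hcard : Nat.card (range (a ^ powIndex a)) ≤ Nat.card α - powIndex a := by
    have := ncard_range_pow_add_le a le_rfl
    rw [Nat.card_coe_set_eq]; omega
  let f := (Finite.equivFin _).toEmbedding.trans (Fin.castLEEmb hcard)
  exact ⟨Equiv.Perm.viaEmbeddingHom f (rangePowPerm a (range_pow_powIndex_succ a)), by
    rw [orderOf_injective _ (Equiv.Perm.viaEmbeddingHom_injective f),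
      orderOf_rangePowPerm_powIndex]⟩

end Function.End

section PermWithTail

variable {n k : ℕ} (hkn : k ≤ n) (σ : Equiv.Perm (Fin k))

def permWithTail : Function.End (Fin n) :=
  fun x => if h : (x : ℕ) < k then Fin.castLE hkn (σ ⟨x, h⟩) else ⟨x - 1, by omega⟩

theorem permWithTail_pow_castLE (t : ℕ) (z : Fin k) :
    (permWithTail hkn σ ^ t) (Fin.castLE hkn z) = Fin.castLE hkn ((σ ^ t) z) := by
  induction t with
  | zero => rfl
  | succ t ih =>
    rw [pow_succ', pow_succ', Equiv.Perm.mul_apply]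
    change permWithTail hkn σ ((permWithTail hkn σ ^ t) (Fin.castLE hkn z)) = _
    rw [ih, permWithTail, dif_pos (by exact ((σ ^ t) z).isLt)]
    rfl

variable {hkn σ}

-- `x + 1 - k` is the distance from `x` to the cycle `{0, …, k - 1}`.
theorem val_permWithTail_add_one_sub (hk : 0 < k) (x : Fin n) :
    (permWithTail hkn σ x : ℕ) + 1 - k = x + 1 - k - 1 := by
  unfold permWithTail
  split_ifs with h
  · have := (σ ⟨x, h⟩).isLt
    simp only [Fin.val_castLE]
    omega
  · simp only
    omega

theorem val_permWithTail_pow_add_one_sub (hk : 0 < k) (t : ℕ) (x : Fin n) :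
    ((permWithTail hkn σ ^ t) x : ℕ) + 1 - k = x + 1 - k - t := by
  induction t with
  | zero => rfl
  | succ t ih =>
    rw [pow_succ']
    exact (val_permWithTail_add_one_sub hk _).trans (by rw [ih]; omega)

theorem exists_permWithTail_pow_eq (hk : 0 < k) (x : Fin n) :
    ∃ z : Fin k, ∀ s,
      (permWithTail hkn σ ^ ((x : ℕ) + 1 - k + s)) x = Fin.castLE hkn ((σ ^ s) z) := by
  set y := (permWithTail hkn σ ^ ((x : ℕ) + 1 - k)) x
  have hy : (y : ℕ) < k := by
    have := val_permWithTail_pow_add_one_sub (hkn := hkn) (σ := σ) hk ((x : ℕ) + 1 - k) x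
    omega
  refine ⟨⟨y, hy⟩, fun s => ?_⟩
  rw [add_comm, pow_add]
  exact permWithTail_pow_castLE hkn σ s ⟨y, hy⟩

theorem permWithTail_pow_add_eq_pow_iff (hk : 0 < k) {i d : ℕ} :
    permWithTail hkn σ ^ (i + d) = permWithTail hkn σ ^ i ↔
      d = 0 ∨ n - k ≤ i ∧ orderOf σ ∣ d := by
  constructor
  · intro h
    refine or_iff_not_imp_left.2 fun hd => ⟨?_, orderOf_dvd_of_pow_eq_one ?_⟩
    · by_contra hi
      have := congrArg (fun y : Fin n => (y : ℕ) + 1 - k) (congrFun h ⟨n - 1, by omega⟩)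
      simp only [val_permWithTail_pow_add_one_sub hk] at this
      omega
    · have hσ : σ ^ (i + d) = σ ^ i := Equiv.ext fun z => Fin.castLE_injective hkn <| by
        rw [← permWithTail_pow_castLE, ← permWithTail_pow_castLE, h]
      rwa [pow_add, mul_eq_left] at hσ
  · rintro (rfl | ⟨hi, hd⟩)
    · rw [add_zero]
    funext x
    obtain ⟨z, hz⟩ := exists_permWithTail_pow_eq (hkn := hkn) (σ := σ) hk x
    obtain ⟨s, rfl⟩ : ∃ s, i = (x : ℕ) + 1 - k + s := ⟨i - ((x : ℕ) + 1 - k), by omega⟩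
    rw [add_assoc, hz, hz, pow_add, orderOf_dvd_iff_pow_eq_one.1 hd, mul_one]

theorem powIndex_eq_and_powPeriod_eq_permWithTail (hk : 0 < k) :
    powIndex (permWithTail hkn σ) = n - k ∧ powPeriod (permWithTail hkn σ) = orderOf σ :=
  powIndex_eq_and_powPeriod_eq_of_pow_add_eq_pow_iff fun _ _ => permWithTail_pow_add_eq_pow_iff hk

end PermWithTail

noncomputable def monogenicInvariant (n : ℕ) : Quotient (monogenicSetoid n) → Σ _ : ℕ, ℕ :=
  Quotient.lift (fun N => ⟨n - powIndex N.2.choose, powPeriod N.2.choose⟩) <| by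
    rintro ⟨M, hM⟩ ⟨N, hN⟩ ⟨e⟩
    obtain ⟨h₁, h₂⟩ := powIndex_eq_and_powPeriod_eq_of_mulEquiv <|
      (MulEquiv.submonoidCongr hM.choose_spec).symm.trans
        (e.trans (MulEquiv.submonoidCongr hN.choose_spec))
    simp only [h₁, h₂]

theorem monogenicInvariant_mk {n : ℕ} (a : Function.End (Fin n)) :
    monogenicInvariant n ⟦⟨closure {a}, a, rfl⟩⟧ = ⟨n - powIndex a, powPeriod a⟩ := by
  obtain ⟨h₁, h₂⟩ := powIndex_eq_and_powPeriod_eq_of_closure_eq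
    (Exists.choose_spec (⟨a, rfl⟩ : ∃ b, Submonoid.closure {a} = Submonoid.closure {b}))
  exact congrArg₂ (fun i r => (⟨n - i, r⟩ : Σ _ : ℕ, ℕ)) h₁.symm h₂.symm

theorem monogenicInvariant_injective {n : ℕ} (hn : 0 < n) :
    Injective (monogenicInvariant n) := by
  have := Fin.pos_iff_nonempty.1 hn
  refine Quotient.ind₂ ?_
  rintro ⟨_, a, rfl⟩ ⟨_, b, rfl⟩ h
  simp only [monogenicInvariant_mk, Sigma.mk.inj_iff, heq_iff_eq] at h
  have ha := a.powIndex_lt_card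
  have hb := b.powIndex_lt_card
  rw [Nat.card_fin] at ha hb
  exact Quotient.sound ⟨closureMulEquivOfPowEqPowIff <|
    pow_eq_pow_iff_of_powIndex_eq_of_powPeriod_eq (by omega) h.2⟩

theorem range_monogenicInvariant {n : ℕ} (hn : 0 < n) :
    range (monogenicInvariant n) = ↑((Finset.Icc 1 n).sigma fun k =>
      Finset.univ.image fun g : Equiv.Perm (Fin k) => orderOf g) := by
  have := Fin.pos_iff_nonempty.1 hn
  ext ⟨k, r⟩
  simp only [mem_range, Finset.coe_sigma, mem_sigma_iff, Finset.coe_Icc, mem_Icc,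
    Finset.coe_image, Finset.coe_univ, image_univ]
  constructor
  · rintro ⟨q, hq⟩
    induction q using Quotient.ind with | _ N => ?_
    obtain ⟨_, a, rfl⟩ := N
    simp only [monogenicInvariant_mk, Sigma.mk.inj_iff, heq_iff_eq] at hq
    obtain ⟨rfl, rfl⟩ := hq
    have ha := a.powIndex_lt_card
    have hσ := a.exists_perm_orderOf_eq_powPeriod
    rw [Nat.card_fin] at ha hσ
    exact ⟨⟨by omega, by omega⟩, hσ⟩
  · rintro ⟨⟨hk, hkn⟩, σ, hσ⟩
    refine ⟨⟦⟨closure {permWithTail hkn σ}, _, rfl⟩⟧, ?_⟩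
    obtain ⟨h₁, h₂⟩ := powIndex_eq_and_powPeriod_eq_permWithTail (hkn := hkn) (σ := σ) hk
    rw [monogenicInvariant_mk, h₁, h₂, hσ, Nat.sub_sub_self hkn]

theorem card_monogenic_submonoids (n : ℕ) (hn : 1 < n) :
    Nat.card (Quotient (monogenicSetoid n)) = ∑ k ∈ Finset.Icc 1 n, numOrders k := by
  rw [← Nat.card_range_of_injective (monogenicInvariant_injective (by omega)),
    range_monogenicInvariant (by omega), Nat.card_coe_set_eq, ncard_coe_finset, Finset.card_sigma]
  rfl
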